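/- The function g(p) = H(0.9p)/H(0.5p), where H is the binary entropy function, satisfies g(p) ≥ g(0.2) > 1.45 for all p ∈ (0, 0.2]. -/

import Mathlib

open Finset

attribute [local instance] Classical.propDecidable

/-- Binary entropy function (base 2). Since `Real.logb 2 0 = 0`, `binEnt 0 = binEnt 1 = 0`. -/
noncomputable def binEnt (x : ℝ) : ℝ :=
  -x * Real.logb 2 x - (1 - x) * Real.logb 2 (1 - x)

section Aux

open Real

lemma lam3_bounds : (0.40546509:ℝ) < Real.log 3 - Real.log 2 ∧
    Real.log 3 - Real.log 2 < 0.40546512 := by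
  have h := Real.abs_log_sub_add_sum_range_le (x := (1/3:ℝ)) (by rw [abs_of_pos] <;> norm_num) 16
  rw [show (1:ℝ) - 1/3 = 2/3 by norm_num,
    Real.log_div (by norm_num) (by norm_num), abs_le] at h
  obtain ⟨h1, h2⟩ := h
  rw [show |(1/3:ℝ)| = 1/3 by rw [abs_of_pos]; norm_num] at h1 h2
  simp only [Finset.sum_range_succ, Finset.sum_range_zero] at h1 h2
  constructor <;> nlinarith

lemma lam5_bounds : (0.22314355:ℝ) < Real.log 5 - 2 * Real.log 2 ∧
    Real.log 5 - 2 * Real.log 2 < 0.22314356 := by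
  have h := Real.abs_log_sub_add_sum_range_le (x := (1/5:ℝ)) (by rw [abs_of_pos] <;> norm_num) 12
  rw [show (1:ℝ) - 1/5 = 4/5 by norm_num,
    Real.log_div (by norm_num) (by norm_num),
    show (4:ℝ) = 2^2 by norm_num, Real.log_pow, abs_le] at h
  obtain ⟨h1, h2⟩ := h
  rw [show |(1/5:ℝ)| = 1/5 by rw [abs_of_pos]; norm_num] at h1 h2
  simp only [Finset.sum_range_succ, Finset.sum_range_zero] at h1 h2
  push_cast at h1 h2
  constructor <;> nlinarith

lemma lam41_bounds : (0.24783616:ℝ) < Real.log 41 - 5 * Real.log 2 ∧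
    Real.log 41 - 5 * Real.log 2 < 0.24783617 := by
  have h := Real.abs_log_sub_add_sum_range_le (x := (9/41:ℝ)) (by rw [abs_of_pos] <;> norm_num) 12
  rw [show (1:ℝ) - 9/41 = 32/41 by norm_num,
    Real.log_div (by norm_num) (by norm_num),
    show (32:ℝ) = 2^5 by norm_num, Real.log_pow, abs_le] at h
  obtain ⟨h1, h2⟩ := h
  rw [show |(9/41:ℝ)| = 9/41 by rw [abs_of_pos]; norm_num] at h1 h2
  simp only [Finset.sum_range_succ, Finset.sum_range_zero] at h1 h2
  push_cast at h1 h2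
  constructor <;> nlinarith

lemma h1_eq : Real.binEntropy 0.1 = Real.log 2 + Real.log 5 - 1.8 * Real.log 3 := by
  have e1 : Real.log (0.1:ℝ) = -(Real.log 2 + Real.log 5) := by
    rw [show (0.1:ℝ) = (2*5)⁻¹ by norm_num, Real.log_inv,
      Real.log_mul (by norm_num) (by norm_num)]
  have e9 : Real.log (0.9:ℝ) = 2 * Real.log 3 - (Real.log 2 + Real.log 5) := by
    rw [show (0.9:ℝ) = 3^2/(2*5) by norm_num,
      Real.log_div (by norm_num) (by norm_num), Real.log_pow,
      Real.log_mul (by norm_num) (by norm_num)]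
    push_cast; ring
  simp only [Real.binEntropy, Real.log_inv, show (1:ℝ) - 0.1 = 0.9 by norm_num, e1, e9]
  ring

lemma h18_eq : Real.binEntropy 0.18 =
    Real.log 2 + 2 * Real.log 5 - 0.36 * Real.log 3 - 0.82 * Real.log 41 := by
  have e18 : Real.log (0.18:ℝ) = 2 * Real.log 3 - (Real.log 2 + 2 * Real.log 5) := by
    rw [show (0.18:ℝ) = 3^2/(2*5^2) by norm_num,
      Real.log_div (by norm_num) (by norm_num), Real.log_pow,
      Real.log_mul (by norm_num) (by norm_num), Real.log_pow]
    push_cast; ring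
  have e82 : Real.log (0.82:ℝ) = Real.log 41 - (Real.log 2 + 2 * Real.log 5) := by
    rw [show (0.82:ℝ) = 41/(2*5^2) by norm_num,
      Real.log_div (by norm_num) (by norm_num),
      Real.log_mul (by norm_num) (by norm_num), Real.log_pow]
    push_cast; ring
  simp only [Real.binEntropy, Real.log_inv, show (1:ℝ) - 0.18 = 0.82 by norm_num, e18, e82]
  ring

lemma key_tight : 1.45 * Real.binEntropy 0.1 < Real.binEntropy 0.18 := by
  rw [h1_eq, h18_eq]
  have := Real.log_two_gt_d9; have := Real.log_two_lt_d9
  obtain ⟨a1,a2⟩ := lam3_bounds; obtain ⟨b1,b2⟩ := lam5_bounds; obtain ⟨c1,c2⟩ := lam41_bounds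
  linarith

lemma h18_lt : Real.binEntropy 0.18 < 1.8 * Real.binEntropy 0.1 := by
  rw [h1_eq, h18_eq]
  have := Real.log_two_gt_d9; have := Real.log_two_lt_d9
  obtain ⟨a1,a2⟩ := lam3_bounds; obtain ⟨b1,b2⟩ := lam5_bounds; obtain ⟨c1,c2⟩ := lam41_bounds
  linarith

lemma h1_pos' : 0 < Real.binEntropy 0.1 :=
  Real.binEntropy_pos (by norm_num) (by norm_num)

lemma h18_pos' : 0 < Real.binEntropy 0.18 :=
  Real.binEntropy_pos (by norm_num) (by norm_num)

noncomputable def Gfun : ℝ → ℝ := fun p =>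
  Real.binEntropy 0.1 * Real.binEntropy (0.9*p) - Real.binEntropy 0.18 * Real.binEntropy (0.5*p)

noncomputable def Gfun' : ℝ → ℝ := fun p =>
  Real.binEntropy 0.1 * ((Real.log (1 - 0.9*p) - Real.log (0.9*p)) * 0.9)
  - Real.binEntropy 0.18 * ((Real.log (1 - 0.5*p) - Real.log (0.5*p)) * 0.5)

lemma hasDerivAt_Gfun {x : ℝ} (hx0 : 0 < x) (hx1 : x < 1) :
    HasDerivAt Gfun (Gfun' x) x := by
  have i9 : HasDerivAt (fun p : ℝ => 0.9 * p) 0.9 x := by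
    simpa using (hasDerivAt_id x).const_mul (0.9:ℝ)
  have i5 : HasDerivAt (fun p : ℝ => 0.5 * p) 0.5 x := by
    simpa using (hasDerivAt_id x).const_mul (0.5:ℝ)
  have b9 : HasDerivAt Real.binEntropy (Real.log (1 - 0.9*x) - Real.log (0.9*x)) (0.9*x) :=
    Real.hasDerivAt_binEntropy (by nlinarith) (by nlinarith)
  have b5 : HasDerivAt Real.binEntropy (Real.log (1 - 0.5*x) - Real.log (0.5*x)) (0.5*x) :=
    Real.hasDerivAt_binEntropy (by nlinarith) (by nlinarith)
  exact ((b9.comp x i9).const_mul _).sub ((b5.comp x i5).const_mul _)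

lemma hasDerivAt_Gfun' {x : ℝ} (hx0 : 0 < x) (hx1 : x < 1) :
    HasDerivAt Gfun'
      (Real.binEntropy 0.1 * ((-0.9/(1 - 0.9*x) - 0.9/(0.9*x)) * 0.9)
       - Real.binEntropy 0.18 * ((-0.5/(1 - 0.5*x) - 0.5/(0.5*x)) * 0.5)) x := by
  have i9 : HasDerivAt (fun p : ℝ => 0.9 * p) 0.9 x := by
    simpa using (hasDerivAt_id x).const_mul (0.9:ℝ)
  have i5 : HasDerivAt (fun p : ℝ => 0.5 * p) 0.5 x := by
    simpa using (hasDerivAt_id x).const_mul (0.5:ℝ)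
  have l9a : HasDerivAt (fun p : ℝ => Real.log (1 - 0.9*p)) (-0.9/(1 - 0.9*x)) x :=
    (i9.const_sub 1).log (by nlinarith)
  have l9b : HasDerivAt (fun p : ℝ => Real.log (0.9*p)) (0.9/(0.9*x)) x :=
    i9.log (by nlinarith)
  have l5a : HasDerivAt (fun p : ℝ => Real.log (1 - 0.5*p)) (-0.5/(1 - 0.5*x)) x :=
    (i5.const_sub 1).log (by nlinarith)
  have l5b : HasDerivAt (fun p : ℝ => Real.log (0.5*p)) (0.5/(0.5*x)) x :=
    i5.log (by nlinarith)
  exact ((((l9a.sub l9b).mul_const 0.9).const_mul _).sub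
    (((l5a.sub l5b).mul_const 0.5).const_mul _))

lemma deriv2_Gfun_neg {x : ℝ} (hx : x ∈ Set.Ioo (0:ℝ) 0.2) :
    deriv^[2] Gfun x < 0 := by
  obtain ⟨hx0, hx2⟩ := hx
  have hx1 : x < 1 := by linarith
  have hEq : Set.EqOn (deriv Gfun) Gfun' (Set.Ioo 0 0.2) := fun y hy =>
    (hasDerivAt_Gfun hy.1 (by linarith [hy.2])).deriv
  have hev : deriv Gfun =ᶠ[nhds x] Gfun' :=
    Filter.eventuallyEq_of_mem (Ioo_mem_nhds hx0 hx2) hEq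
  have : deriv^[2] Gfun x = deriv Gfun' x := by
    simp only [Function.iterate_succ, Function.iterate_zero, Function.comp_apply, id]
    exact hev.deriv_eq
  rw [this, (hasDerivAt_Gfun' hx0 hx1).deriv]
  have hu : (0:ℝ) < 1 - 0.9*x := by nlinarith
  have hv : (0:ℝ) < 1 - 0.5*x := by nlinarith
  have e1 : (0.9:ℝ)/(0.9*x) = 1/x := by field_simp
  have e2 : (0.5:ℝ)/(0.5*x) = 1/x := by field_simp
  rw [e1, e2]
  have hxi : (0:ℝ) < 1/x := by positivity
  have hu1 : (1:ℝ) ≤ 1/(1 - 0.9*x) := by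
    rw [le_div_iff₀ hu]; nlinarith
  have hv1 : 1/(1 - 0.5*x) ≤ 1/(0.9:ℝ) := by
    apply one_div_le_one_div_of_le <;> nlinarith
  have h1p := h1_pos'; have h18p := h18_pos'; have hlt := h18_lt
  have key1 : Real.binEntropy 0.18 * (1/x) * 0.5 < Real.binEntropy 0.1 * (1/x) * 0.9 := by
    nlinarith [mul_pos (sub_pos.2 hlt) hxi]
  have key2 : Real.binEntropy 0.18 * (1/(1-0.5*x)) * 0.25 <
      Real.binEntropy 0.1 * (1/(1-0.9*x)) * 0.81 := by
    have hvpos : (0:ℝ) < 1/(1-0.5*x) := by positivity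
    nlinarith [mul_pos (sub_pos.2 hlt) hvpos, mul_le_mul_of_nonneg_left hv1 h18p.le,
      mul_le_mul_of_nonneg_left hu1 h1p.le]
  have expand : Real.binEntropy 0.1 * ((-0.9/(1 - 0.9*x) - 1/x) * 0.9)
      - Real.binEntropy 0.18 * ((-0.5/(1 - 0.5*x) - 1/x) * 0.5)
      = -(Real.binEntropy 0.1 * (1/(1-0.9*x)) * 0.81) - Real.binEntropy 0.1 * (1/x) * 0.9
        + Real.binEntropy 0.18 * (1/(1-0.5*x)) * 0.25 + Real.binEntropy 0.18 * (1/x) * 0.5 := by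
    field_simp
    ring
  rw [expand]
  linarith

lemma Gfun_nonneg {p : ℝ} (hp0 : 0 < p) (hp1 : p ≤ 0.2) : 0 ≤ Gfun p := by
  have hconc : StrictConcaveOn ℝ (Set.Icc (0:ℝ) 0.2) Gfun := by
    apply strictConcaveOn_of_deriv2_neg (convex_Icc 0 0.2)
    · apply Continuous.continuousOn
      unfold Gfun
      fun_prop
    · intro x hx
      rw [interior_Icc] at hx
      exact deriv2_Gfun_neg hx
  have hG0 : Gfun 0 = 0 := by
    simp [Gfun]
  have hG2 : Gfun 0.2 = 0 := by
    unfold Gfun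
    rw [show (0.9:ℝ)*0.2 = 0.18 by norm_num, show (0.5:ℝ)*0.2 = 0.1 by norm_num]
    ring
  have ha : (0:ℝ) ≤ 1 - p/0.2 := by
    have : p/0.2 ≤ 1 := by rw [div_le_one (by norm_num)]; linarith
    linarith
  have hb : (0:ℝ) ≤ p/0.2 := by positivity
  have hmem0 : (0:ℝ) ∈ Set.Icc (0:ℝ) 0.2 := by constructor <;> norm_num
  have hmem2 : (0.2:ℝ) ∈ Set.Icc (0:ℝ) 0.2 := by constructor <;> norm_num
  have := hconc.concaveOn.2 hmem0 hmem2 ha hb (by ring)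
  have hcomb : (1 - p/0.2) • (0:ℝ) + (p/0.2) • (0.2:ℝ) = p := by
    simp only [smul_eq_mul]
    field_simp
    ring
  rw [hcomb, hG0, hG2] at this
  simpa using this

lemma binEnt_eq (x : ℝ) : binEnt x = Real.binEntropy x / Real.log 2 := by
  simp only [binEnt, Real.binEntropy, Real.logb, Real.log_inv]
  ring

end Aux

theorem stmt4 (p : ℝ) (hp0 : 0 < p) (hp1 : p ≤ 0.2) :
    binEnt (0.9 * p) / binEnt (0.5 * p) ≥ binEnt (0.9 * 0.2) / binEnt (0.5 * 0.2) ∧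
    binEnt (0.9 * 0.2) / binEnt (0.5 * 0.2) > 1.45 := by
  have hlog2 : Real.log 2 ≠ 0 := ne_of_gt (Real.log_pos (by norm_num))
  have ratio_eq : ∀ a b : ℝ, binEnt a / binEnt b = Real.binEntropy a / Real.binEntropy b := by
    intro a b
    rw [binEnt_eq, binEnt_eq, div_div_div_comm, div_self hlog2, div_one]
  rw [show (0.9:ℝ)*0.2 = 0.18 by norm_num, show (0.5:ℝ)*0.2 = 0.1 by norm_num,
    ratio_eq, ratio_eq]
  have h1p := h1_pos'
  have hb5 : 0 < Real.binEntropy (0.5*p) :=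
    Real.binEntropy_pos (by linarith) (by nlinarith)
  constructor
  · rw [ge_iff_le, div_le_div_iff₀ h1p hb5]
    have := Gfun_nonneg hp0 hp1
    unfold Gfun at this
    nlinarith
  · rw [gt_iff_lt, lt_div_iff₀ h1p]
    have := key_tight
    linarith
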